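/- (Sensitivity of the value function: −M(x,r) ⊆ ∂v(r).) Let r ∈ ℝ^J with r ≥ 0, let x ∈ S_c(r), and let λ ∈ M(x,r). Then −λ is a subgradient of the value function v at r relative to the domain ℝ^J_+; that is, for every r' ∈ ℝ^J with r' ≥ 0, v(r') ≥ v(r) − ⟨λ, r' − r⟩ (equivalently, v(r') ≥ v(r) + ⟨−λ, r' − r⟩). -/

import Mathlib

open scoped InnerProductSpace
open Filter Topology

noncomputable section

/-- Euclidean space `ℝ^m`. -/
abbrev Eu (m : ℕ) : Type := EuclideanSpace ℝ (Fin m)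

/-- Subgradient set (in the sense of convex analysis) of `f` at `x`. -/
def Subgrad {E : Type*} [NormedAddCommGroup E] [InnerProductSpace ℝ E]
    (f : E → ℝ) (x : E) : Set E :=
  {g | ∀ y, f x + ⟪g, y - x⟫_ℝ ≤ f y}

/-- Feasible region `F(r) = {x : P_i(x) ≤ r_i, i = 1,…,J}`. -/
def Feas {n J : ℕ} (P : Fin J → Eu n → ℝ) (r : Eu J) : Set (Eu n) :=
  {x | ∀ i, P i x ≤ r i}

/-- `S_p(λ)`: global minimizers of `x' ↦ l(x') + Σ_i λ_i P_i(x')`. -/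
def Sp {n J : ℕ} (l : Eu n → ℝ) (P : Fin J → Eu n → ℝ) (lam : Eu J) : Set (Eu n) :=
  {x | ∀ x', l x + ∑ i, lam i * P i x ≤ l x' + ∑ i, lam i * P i x'}

/-- `S_c(r)`: global minimizers of `l` over `F(r)`. -/
def Sc {n J : ℕ} (l : Eu n → ℝ) (P : Fin J → Eu n → ℝ) (r : Eu J) : Set (Eu n) :=
  {x | x ∈ Feas P r ∧ ∀ x' ∈ Feas P r, l x ≤ l x'}

/-- The multiplier set `M(x,r)`. -/
def Mset {n J : ℕ} (l : Eu n → ℝ) (P : Fin J → Eu n → ℝ) (x : Eu n) (r : Eu J) :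
    Set (Eu J) :=
  {lam | (∀ i, 0 ≤ lam i) ∧
    (∃ u ∈ Subgrad l x, ∃ v : Fin J → Eu n,
      (∀ i, v i ∈ Subgrad (P i) x) ∧ u + ∑ i, lam i • v i = 0) ∧
    (∀ i, lam i * (P i x - r i) = 0)}

/-- The value function `v(r) = inf { l(x) : x ∈ F(r) }`. -/
def vfun {n J : ℕ} (l : Eu n → ℝ) (P : Fin J → Eu n → ℝ) (r : Eu J) : ℝ :=
  sInf (l '' Feas P r)

/-!
Since `0 = u + Σ λᵢ vᵢ` is a subgradient of the Lagrangian `l + Σ λᵢ Pᵢ` at `x`, the point `x`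
minimizes it globally. Complementary slackness gives `Σ λᵢ Pᵢ(x) = ⟪λ, r⟫`, while
`Σ λᵢ Pᵢ(y) ≤ ⟪λ, r'⟫` on `F(r')`; so `l x + ⟪λ, r⟫ ≤ l y + ⟪λ, r'⟫` for every `y ∈ F(r')`,
and `v(r) = l x`.
-/

section Subgrad

variable {E : Type*} [NormedAddCommGroup E] [InnerProductSpace ℝ E] {x : E}

theorem add_mem_subgrad {f h : E → ℝ} {g k : E} (hg : g ∈ Subgrad f x) (hk : k ∈ Subgrad h x) :
    g + k ∈ Subgrad (fun y => f y + h y) x := fun y => by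
  have := hg y
  have := hk y
  rw [inner_add_left]
  linarith

theorem sum_smul_mem_subgrad {ι : Type*} (s : Finset ι) {c : ι → ℝ} (hc : ∀ i, 0 ≤ c i)
    {f : ι → E → ℝ} {g : ι → E} (hg : ∀ i, g i ∈ Subgrad (f i) x) :
    ∑ i ∈ s, c i • g i ∈ Subgrad (fun y => ∑ i ∈ s, c i * f i y) x := fun y => by
  rw [sum_inner, ← Finset.sum_add_distrib]
  refine Finset.sum_le_sum fun i _ => ?_
  rw [real_inner_smul_left, ← mul_add]
  exact mul_le_mul_of_nonneg_left (hg i y) (hc i)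

theorem le_of_zero_mem_subgrad {f : E → ℝ} (h : 0 ∈ Subgrad f x) (y : E) : f x ≤ f y := by
  simpa using h y

end Subgrad

section Multipliers

variable {n J : ℕ} {l : Eu n → ℝ} {P : Fin J → Eu n → ℝ} {x : Eu n} {r lam : Eu J}

theorem mem_Sp_of_mem_Mset (hlam : lam ∈ Mset l P x r) : x ∈ Sp l P lam := by
  obtain ⟨hnn, ⟨u, hu, v, hv, hzero⟩, -⟩ := hlam
  have hsub := add_mem_subgrad hu (sum_smul_mem_subgrad Finset.univ hnn hv)
  rw [hzero] at hsub
  exact le_of_zero_mem_subgrad hsub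

theorem sum_mul_eq_inner_of_mem_Mset (hlam : lam ∈ Mset l P x r) :
    ∑ i, lam i * P i x = ⟪lam, r⟫_ℝ := by
  rw [PiLp.inner_apply]
  refine Finset.sum_congr rfl fun i _ => ?_
  have := hlam.2.2 i
  simp only [RCLike.inner_apply, conj_trivial]
  linarith

theorem sum_mul_le_inner_of_mem_Feas {y : Eu n} (hnn : ∀ i, 0 ≤ lam i) (hy : y ∈ Feas P r) :
    ∑ i, lam i * P i y ≤ ⟪lam, r⟫_ℝ := by
  rw [PiLp.inner_apply]
  refine Finset.sum_le_sum fun i _ => ?_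
  simp only [RCLike.inner_apply, conj_trivial]
  rw [mul_comm (r i)]
  exact mul_le_mul_of_nonneg_left (hy i) (hnn i)

theorem vfun_eq_of_mem_Sc (hx : x ∈ Sc l P r) : vfun l P r = l x :=
  IsLeast.csInf_eq ⟨⟨x, hx.1, rfl⟩, by rintro _ ⟨y, hy, rfl⟩; exact hx.2 y hy⟩

end Multipliers

theorem stmt7_general {n J : ℕ}
    (l : Eu n → ℝ) (P : Fin J → Eu n → ℝ)
    (hFne : ∀ r : Eu J, (∀ i, 0 ≤ r i) → (Feas P r).Nonempty)
    (r : Eu J)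
    (x : Eu n) (hx : x ∈ Sc l P r)
    (lam : Eu J) (hlam : lam ∈ Mset l P x r) :
    ∀ r' : Eu J, (∀ i, 0 ≤ r' i) →
      vfun l P r + ⟪-lam, r' - r⟫_ℝ ≤ vfun l P r' := by
  intro r' hr'
  rw [vfun_eq_of_mem_Sc hx, inner_neg_left, inner_sub_right]
  refine le_csInf ((hFne r' hr').image l) ?_
  rintro _ ⟨y, hy, rfl⟩
  have hlagr := mem_Sp_of_mem_Mset hlam y
  have hslack := sum_mul_eq_inner_of_mem_Mset hlam
  have hfeas := sum_mul_le_inner_of_mem_Feas hlam.1 hy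
  linarith

theorem stmt7 {n J : ℕ} (hn : 1 ≤ n) (hJ : 1 ≤ J)
    (l : Eu n → ℝ) (P : Fin J → Eu n → ℝ)
    (hlcv : ConvexOn ℝ Set.univ l) (hlc : Continuous l)
    (hPcv : ∀ i, ConvexOn ℝ Set.univ (P i)) (hPc : ∀ i, Continuous (P i))
    (hPnn : ∀ i x, 0 ≤ P i x)
    (hFne : ∀ r : Eu J, (∀ i, 0 ≤ r i) → (Feas P r).Nonempty)
    (hbdd : ∀ r : Eu J, (∀ i, 0 ≤ r i) → BddBelow (l '' Feas P r))
    (r : Eu J) (hr : ∀ i, 0 ≤ r i)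
    (x : Eu n) (hx : x ∈ Sc l P r)
    (lam : Eu J) (hlam : lam ∈ Mset l P x r) :
    ∀ r' : Eu J, (∀ i, 0 ≤ r' i) →
      vfun l P r + ⟪-lam, r' - r⟫_ℝ ≤ vfun l P r' :=
  stmt7_general l P hFne r x hx lam hlam
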